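/- Let σ_1 = (1−u_1²)+(1−u_2²)+(1−u_3²) and σ_3 = (1−u_1²)(1−u_2²)(1−u_3²), where u_1 = √(2(2+√2)) − 1 − √2, u_2 = √(2+√2) − 1, u_3 = 1 + √2 − √(2+√2). Then for every ζ ∈ (0,1], the quantity y = −(32/ζ)·( (ζ²/64)(2 − σ_1) + (1/2 − ζ²σ_3/128)² ) satisfies y < −1, and consequently α = (ζ + y)/8 < 0 and γ = (y − ζ)/6 < 0. -/

import Mathlib

/-!
With `s = √2` and `t = √(2 + √2)` one has `√(2(2 + √2)) = s t`. Since `u2, u3 ∈ [-1, 1]`, the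
factors `1 - uᵢ²` of `σ3` are at most `1` and the last two are nonnegative, so `σ3 ≤ 1`.
Moreover `u1² + u2² + u3² - 1 = 2 (7 + 4s - 2t(2 + s))` and `(7 + 4s)² - (2t(2 + s))² = 1`,
so `σ1 ≤ 2`.
These two bounds make the bracket in `y` at least `(63/128)²` and `32/ζ ≥ 32`, whence
`y ≤ -32 (63/128)² < -1`.
-/

open Real

noncomputable def u1 : ℝ := Real.sqrt (2 * (2 + Real.sqrt 2)) - 1 - Real.sqrt 2

noncomputable def u2 : ℝ := Real.sqrt (2 + Real.sqrt 2) - 1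

noncomputable def u3 : ℝ := 1 + Real.sqrt 2 - Real.sqrt (2 + Real.sqrt 2)

noncomputable def σ1 : ℝ := (1 - u1 ^ 2) + (1 - u2 ^ 2) + (1 - u3 ^ 2)

noncomputable def σ3 : ℝ := (1 - u1 ^ 2) * (1 - u2 ^ 2) * (1 - u3 ^ 2)

open Set

lemma neg_div_mul_lt_neg_one {ζ s₁ s₃ : ℝ} (hζ : ζ ∈ Ioc (0 : ℝ) 1) (h₁ : s₁ ≤ 2)
    (h₃ : s₃ ≤ 1) :
    -(32 / ζ) * ((ζ ^ 2 / 64) * (2 - s₁) + (1 / 2 - ζ ^ 2 * s₃ / 128) ^ 2) < -1 := by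
  obtain ⟨hζ0, hζ1⟩ := hζ
  have hζs₃ : ζ ^ 2 * s₃ ≤ 1 :=
    (mul_le_of_le_one_right (sq_nonneg ζ) h₃).trans (pow_le_one₀ hζ0.le hζ1)
  have hsq : ((63 : ℝ) / 128) ^ 2 ≤ (1 / 2 - ζ ^ 2 * s₃ / 128) ^ 2 :=
    pow_le_pow_left₀ (by norm_num) (by linarith) 2
  have hlinear : 0 ≤ (ζ ^ 2 / 64) * (2 - s₁) := mul_nonneg (by positivity) (sub_nonneg.2 h₁)
  have hfactor : (32 : ℝ) ≤ 32 / ζ := by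
    rw [le_div_iff₀ hζ0]; linarith
  have := mul_le_mul hfactor (le_add_of_nonneg_of_le hlinear hsq) (by positivity) (by positivity)
  linarith

lemma sqrt_two_le_sqrt_two_add_sqrt_two : √2 ≤ √(2 + √2) :=
  sqrt_le_sqrt (by linarith [sqrt_nonneg 2])

lemma one_le_sqrt_two_add_sqrt_two : 1 ≤ √(2 + √2) :=
  one_le_sqrt.mpr (by linarith [sqrt_nonneg 2])

lemma sqrt_two_add_sqrt_two_le_two : √(2 + √2) ≤ 2 := by
  have : √2 ≤ 2 := (sqrt_le_left zero_le_two).mpr (by norm_num)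
  exact (sqrt_le_left zero_le_two).mpr (by linarith)

lemma sq_sqrt_two_add_sqrt_two : √(2 + √2) ^ 2 = 2 + √2 :=
  sq_sqrt (by positivity)

lemma u1_eq : u1 = √2 * √(2 + √2) - 1 - √2 := by
  rw [u1, sqrt_mul zero_le_two]

lemma sq_u2_le_one : u2 ^ 2 ≤ 1 := by
  have := one_le_sqrt_two_add_sqrt_two
  have := sqrt_two_add_sqrt_two_le_two
  rw [sq_le_one_iff_abs_le_one, abs_le, u2]
  constructor <;> linarith

lemma sq_u3_le_one : u3 ^ 2 ≤ 1 := by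
  have := sqrt_nonneg 2
  have := sqrt_two_le_sqrt_two_add_sqrt_two
  have := sqrt_two_add_sqrt_two_le_two
  rw [sq_le_one_iff_abs_le_one, abs_le, u3]
  constructor <;> linarith

lemma one_le_sq_u1_add_sq_u2_add_sq_u3 : 1 ≤ u1 ^ 2 + u2 ^ 2 + u3 ^ 2 := by
  set s := √2
  set t := √(2 + s)
  have hs2 : s ^ 2 = 2 := sq_sqrt zero_le_two
  have ht2 : t ^ 2 = 2 + s := sq_sqrt_two_add_sqrt_two
  have hsum : u1 ^ 2 + u2 ^ 2 + u3 ^ 2 - 1 = 2 * (7 + 4 * s - 2 * t * (2 + s)) := by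
    rw [u1_eq, u2, u3]
    linear_combination (t ^ 2 - 2 * t + 2) * hs2 + 4 * ht2
  have hdiff : (2 * t * (2 + s)) ^ 2 + 1 = (7 + 4 * s) ^ 2 := by
    linear_combination 4 * (s + 2) * hs2 + 4 * (2 + s) ^ 2 * ht2
  have hlt : 2 * t * (2 + s) < 7 + 4 * s :=
    lt_of_pow_lt_pow_left₀ 2 (by positivity) (by linarith)
  linarith

lemma σ1_le_two : σ1 ≤ 2 := by
  have := one_le_sq_u1_add_sq_u2_add_sq_u3
  rw [σ1]; linarith

lemma σ3_le_one : σ3 ≤ 1 := by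
  have h2 : 0 ≤ 1 - u2 ^ 2 := sub_nonneg.2 sq_u2_le_one
  have h3 : 0 ≤ 1 - u3 ^ 2 := sub_nonneg.2 sq_u3_le_one
  rw [σ3, mul_assoc]
  exact mul_le_one₀ (sub_le_self _ (sq_nonneg _)) (mul_nonneg h2 h3)
    (mul_le_one₀ (sub_le_self _ (sq_nonneg _)) h3 (sub_le_self _ (sq_nonneg _)))

/-- Lemma 4 of the paper (the quarter-circle case `φ = π/2`): for every `ζ ∈ (0,1]`,
`y = −(32/ζ)((ζ²/64)(2−σ₁) + (1/2 − ζ²σ₃/128)²)` satisfies `y < −1`, and consequently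
`α = (ζ+y)/8 < 0` and `γ = (y−ζ)/6 < 0`. -/
theorem stmt_17 (ζ : ℝ) (hζ : ζ ∈ Set.Ioc (0 : ℝ) 1)
    (y : ℝ)
    (hy : y = -(32 / ζ) * ((ζ ^ 2 / 64) * (2 - σ1) + (1 / 2 - ζ ^ 2 * σ3 / 128) ^ 2)) :
    y < -1 ∧ (ζ + y) / 8 < 0 ∧ (y - ζ) / 6 < 0 := by
  have hy1 : y < -1 := hy ▸ neg_div_mul_lt_neg_one hζ σ1_le_two σ3_le_one
  exact ⟨hy1, by linarith [hζ.2], by linarith [hζ.1]⟩
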